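/- Let H = (X, E) be a 4-uniform hypergraph with n = |X|, let Ĥ = (X̂, Ê) be its reduced hypergraph, and let n̂ = |X̂|. Suppose n ≥ n̂ + 2. If Ĥ admits a no-rainbow r-coloring for some r ∈ {2, 3, 4}, then H admits a no-rainbow 4-coloring. -/

import Mathlib

/-!
Compose the coloring of the reduced hypergraph with the quotient map: an edge of `H` is rainbow
exactly when its image in `Ĥ` is, and some `r ≤ n̂` vertices already see every color. The at
least two remaining vertices can then each be given a fresh color,
which turns a no-rainbow `r`-coloring into a no-rainbow `(r + 1)`-coloring, until four colors
are used.
-/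

open Finset

section Rainbow

variable {α β κ : Type*}

def IsRainbow (c : α → κ) (s : Finset α) : Prop :=
  ∀ i, ∃ v ∈ s, c v = i

theorem isRainbow_comp_iff [DecidableEq β] {c : β → κ} {f : α → β} {s : Finset α} :
    IsRainbow (c ∘ f) s ↔ IsRainbow c (s.image f) := by
  simp [IsRainbow]

theorem isRainbow_univ_iff [Fintype α] {c : α → κ} :
    IsRainbow c univ ↔ Function.Surjective c := by
  simp [IsRainbow, Function.Surjective]

theorem IsRainbow.card_le [Fintype κ] [DecidableEq κ] {c : α → κ} {s : Finset α}
    (hs : IsRainbow c s) : Fintype.card κ ≤ #s := by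
  have : (univ : Finset κ) ⊆ s.image c := fun i _ => by simpa using hs i
  exact (card_le_card this).trans card_image_le

theorem IsRainbow.exists_card_le [Fintype κ] [DecidableEq α] {c : α → κ} {s : Finset α}
    (hs : IsRainbow c s) : ∃ t : Finset α, #t ≤ Fintype.card κ ∧ IsRainbow c t := by
  choose w _ hw using hs
  exact ⟨univ.image w, card_image_le, fun i => ⟨w i, mem_image_of_mem w (mem_univ i), hw i⟩⟩

end Rainbow

section FreshColor

variable {α : Type*} [DecidableEq α] {r : ℕ}

def freshColorAt (c : α → Fin r) (u : α) : α → Fin (r + 1) :=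
  Function.update (Fin.castSucc ∘ c) u (Fin.last r)

theorem IsRainbow.freshColorAt_insert {c : α → Fin r} {R : Finset α} (hR : IsRainbow c R)
    {u : α} (hu : u ∉ R) : IsRainbow (freshColorAt c u) (insert u R) := by
  intro i
  induction i using Fin.lastCases with
  | last => exact ⟨u, mem_insert_self u R, by simp [freshColorAt]⟩
  | cast i =>
    obtain ⟨v, hv, hcv⟩ := hR i
    have hvu : v ≠ u := by rintro rfl; exact hu hv
    exact ⟨v, mem_insert_of_mem hv, by simp [freshColorAt, hvu, hcv]⟩

theorem IsRainbow.of_freshColorAt {c : α → Fin r} {u : α} {e : Finset α}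
    (he : IsRainbow (freshColorAt c u) e) : IsRainbow c e := by
  intro i
  obtain ⟨v, hv, hcv⟩ := he i.castSucc
  have hvu : v ≠ u := by
    rintro rfl
    simp only [freshColorAt, Function.update_self, Fin.ext_iff, Fin.val_last,
      Fin.val_castSucc] at hcv
    exact (Nat.ne_of_gt i.isLt) hcv
  exact ⟨v, hv, by simpa [freshColorAt, hvu] using hcv⟩

variable [Fintype α]

theorem IsRainbow.exists_extend {c : α → Fin r} {R : Finset α} (hR : IsRainbow c R) {k : ℕ}
    (hrk : r ≤ k) (hcard : #R + (k - r) ≤ Fintype.card α) :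
    ∃ c' : α → Fin k, Function.Surjective c' ∧ ∀ e, IsRainbow c' e → IsRainbow c e := by
  suffices ∃ (c' : α → Fin k) (R' : Finset α), IsRainbow c' R' ∧ #R' ≤ #R + (k - r) ∧
      ∀ e, IsRainbow c' e → IsRainbow c e by
    obtain ⟨c', R', hR', -, hlift⟩ := this
    exact ⟨c', isRainbow_univ_iff.1 fun i => (hR' i).imp fun v hv => ⟨mem_univ v, hv.2⟩, hlift⟩
  induction k, hrk using Nat.le_induction with
  | base => exact ⟨c, R, hR, by simp, fun _ he => he⟩
  | succ k hrk ih =>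
    obtain ⟨c', R', hR', hR'card, hlift⟩ := ih (by omega)
    obtain ⟨u, -, hu⟩ := exists_mem_notMem_of_card_lt_card (s := R') (t := univ)
      (by rw [card_univ]; omega)
    refine ⟨freshColorAt c' u, insert u R', hR'.freshColorAt_insert hu, ?_,
      fun e he => hlift e he.of_freshColorAt⟩
    grw [card_insert_le]
    omega

end FreshColor

theorem noRainbow_of_reduced_noRainbow_general {α : Type*} [Fintype α] [DecidableEq α]
    (E : Finset (Finset α))
    (sig : α → Finset (Finset α))
    (hn : (Finset.univ.image sig).card + 2 ≤ Fintype.card α)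
    (hred : ∃ r : ℕ, (r = 2 ∨ r = 3 ∨ r = 4) ∧
        ∃ chat : Finset (Finset α) → Fin r,
          (∀ i : Fin r, ∃ s ∈ Finset.univ.image sig, chat s = i) ∧
          ∀ e ∈ E, ¬ (∀ i : Fin r, ∃ s ∈ e.image sig, chat s = i)) :
    ∃ c : α → Fin 4, Function.Surjective c ∧
      ∀ e ∈ E, ¬ (∀ i : Fin 4, ∃ v ∈ e, c v = i) := by
  obtain ⟨r, hr234, chat, hsurj, hnoRainbow⟩ := hred
  have hchat : IsRainbow chat (univ.image sig) := hsurj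
  have hr : r ≤ #(univ.image sig) := by simpa using hchat.card_le
  obtain ⟨R, hRcard, hR⟩ := (isRainbow_comp_iff.2 hchat).exists_card_le
  rw [Fintype.card_fin] at hRcard
  obtain ⟨c, hc, hlift⟩ := hR.exists_extend (k := 4) (by omega) (by omega)
  exact ⟨c, hc, fun e he hce => hnoRainbow e he (isRainbow_comp_iff.1 (hlift e hce))⟩

/-- Let `(X, E)` be a 4-uniform hypergraph with `n = |X|`, and let
`Ĥ = (X̂, Ê)` be its reduced hypergraph (vertices = equivalence classes of vertices
under "belongs to exactly the same hyperedges", each class identified with its common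
set `sig v = {e ∈ E : v ∈ e}` of incident hyperedges; `Ê = {e.image sig : e ∈ E}`),
with `n̂ = |X̂|`.  Suppose `n ≥ n̂ + 2`.  If `Ĥ` admits a no-rainbow `r`-coloring for
some `r ∈ {2, 3, 4}`, then `H` admits a no-rainbow 4-coloring. -/
theorem noRainbow_of_reduced_noRainbow {α : Type*} [Fintype α] [DecidableEq α]
    (E : Finset (Finset α)) (hunif : ∀ e ∈ E, e.card = 4)
    (sig : α → Finset (Finset α))
    (hsig : ∀ v : α, sig v = E.filter (fun e => v ∈ e))
    (hn : (Finset.univ.image sig).card + 2 ≤ Fintype.card α)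
    (hred : ∃ r : ℕ, (r = 2 ∨ r = 3 ∨ r = 4) ∧
        ∃ chat : Finset (Finset α) → Fin r,
          (∀ i : Fin r, ∃ s ∈ Finset.univ.image sig, chat s = i) ∧
          ∀ e ∈ E, ¬ (∀ i : Fin r, ∃ s ∈ e.image sig, chat s = i)) :
    ∃ c : α → Fin 4, Function.Surjective c ∧
      ∀ e ∈ E, ¬ (∀ i : Fin 4, ∃ v ∈ e, c v = i) :=
  noRainbow_of_reduced_noRainbow_general E sig hn hred
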